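/- Let $u : \mathbb{H}^n \to \mathbb{C}^n$, $n > 2$, be a smooth mapping satisfying $Z_k u_l + \overline{Z_l u_k} = 0$ for all $k, l$ and $\overline{Z}_k u_l = 0$ for all $k, l$, where $Z_j = \partial_{z_j} + i \overline{z}_j \partial_t$ and $\overline{Z}_j = \partial_{\overline{z}_j} - i z_j \partial_t$ on $\mathbb{C}^n \times \mathbb{R}$. Then $u(z,t) = a + Kz$ for some constant vector $a \in \mathbb{C}^n$ and constant skew-Hermitian matrix $K$ (i.e., $K + K^* = 0$). -/

import Mathlib

open scoped ComplexConjugate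

/-- The left-invariant complex vector field `Z_j = ∂_{z_j} + i z̄_j ∂_t` on
`ℍⁿ ≅ ℂⁿ × ℝ`, acting on a (ℝ-smooth) function `f : ℂⁿ × ℝ → ℂ`; here
`∂_{z_j} = ½(∂_{x_j} - i ∂_{y_j})` is the Wirtinger derivative. -/
noncomputable def Zderiv {n : ℕ} (j : Fin n) (f : (Fin n → ℂ) × ℝ → ℂ)
    (p : (Fin n → ℂ) × ℝ) : ℂ :=
  (1 / 2) * (fderiv ℝ f p (Pi.single j 1, 0)
      - Complex.I * fderiv ℝ f p (Pi.single j Complex.I, 0))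
    + Complex.I * conj (p.1 j) * fderiv ℝ f p (0, 1)

/-- The vector field `Z̄_j = ∂_{z̄_j} - i z_j ∂_t`, with
`∂_{z̄_j} = ½(∂_{x_j} + i ∂_{y_j})`. -/
noncomputable def Zbarderiv {n : ℕ} (j : Fin n) (f : (Fin n → ℂ) × ℝ → ℂ)
    (p : (Fin n → ℂ) × ℝ) : ℂ :=
  (1 / 2) * (fderiv ℝ f p (Pi.single j 1, 0)
      + Complex.I * fderiv ℝ f p (Pi.single j Complex.I, 0))
    - Complex.I * (p.1 j) * fderiv ℝ f p (0, 1)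

open Complex

namespace KQ
variable {n : ℕ}

local notation "E" => (Fin n → ℂ) × ℝ

noncomputable def Hd (f : (Fin n → ℂ) × ℝ → ℂ) (p v w : (Fin n → ℂ) × ℝ) : ℂ :=
  fderiv ℝ (fderiv ℝ f) p v w

lemma hEval {f : (Fin n → ℂ) × ℝ → ℂ} (hf : ContDiff ℝ (⊤ : ℕ∞) f) (p v : E) :
    HasFDerivAt (fun q => fderiv ℝ f q v)
      ((ContinuousLinearMap.apply ℝ ℂ v).comp (fderiv ℝ (fderiv ℝ f) p)) p :=
  (ContinuousLinearMap.apply ℝ ℂ v).hasFDerivAt.comp p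
    (((hf.fderiv_right (m := 1) (WithTop.coe_le_coe.mpr le_top)).differentiable one_ne_zero p).hasFDerivAt)

lemma hProj (k : Fin n) (p : E) :
    HasFDerivAt (fun q : (Fin n → ℂ) × ℝ => q.1 k)
      ((ContinuousLinearMap.proj k).comp (ContinuousLinearMap.fst ℝ (Fin n → ℂ) ℝ)) p :=
  ((ContinuousLinearMap.proj k).comp (ContinuousLinearMap.fst ℝ (Fin n → ℂ) ℝ)).hasFDerivAt

lemma symmH {f : (Fin n → ℂ) × ℝ → ℂ} (hf : ContDiff ℝ (⊤ : ℕ∞) f) (p v w : E) :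
    Hd f p v w = Hd f p w v :=
  second_derivative_symmetric (fun y => (hf.differentiable (by simp) y).hasFDerivAt)
    (((hf.fderiv_right (m := 1) (WithTop.coe_le_coe.mpr le_top)).differentiable one_ne_zero p).hasFDerivAt) v w

lemma zero_deriv {g : (Fin n → ℂ) × ℝ → ℂ} {D : ((Fin n → ℂ) × ℝ) →L[ℝ] ℂ} {p : E}
    (h : ∀ q, g q = 0) (hg : HasFDerivAt g D p) : ∀ w, D w = 0 := by
  have : D = 0 := by
    refine hg.unique ?_
    rw [show g = fun _ => (0:ℂ) from funext h]
    exact hasFDerivAt_const 0 p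
  simp [this]

end KQ

namespace KQ
variable {n : ℕ}

lemma key_bar {f : (Fin n → ℂ) × ℝ → ℂ} (hf : ContDiff ℝ (⊤ : ℕ∞) f) (k : Fin n)
    (h : ∀ p, Zbarderiv k f p = 0) (p w : (Fin n → ℂ) × ℝ) :
    (1/2 : ℂ) * (Hd f p w (Pi.single k 1, 0) + Complex.I * Hd f p w (Pi.single k Complex.I, 0))
      - Complex.I * w.1 k * fderiv ℝ f p (0, 1)
      - Complex.I * p.1 k * Hd f p w (0, 1) = 0 := by
  have h1 := hEval hf p ((Pi.single k 1, 0) : (Fin n → ℂ) × ℝ)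
  have h2 := hEval hf p ((Pi.single k Complex.I, 0) : (Fin n → ℂ) × ℝ)
  have h3 := hEval hf p ((0, 1) : (Fin n → ℂ) × ℝ)
  have hz := hProj k p
  have hG := ((h1.add (h2.const_mul Complex.I)).const_mul ((1:ℂ)/2)).sub
    ((hz.const_mul Complex.I).mul h3)
  have h0 := zero_deriv (g := fun q => Zbarderiv k f q)
    (fun q => h q) (hG.congr_of_eventuallyEq (Filter.Eventually.of_forall fun q => by simp [Zbarderiv])) w
  simp only [ContinuousLinearMap.coe_sub', Pi.sub_apply, ContinuousLinearMap.coe_smul',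
    Pi.smul_apply, ContinuousLinearMap.add_apply, ContinuousLinearMap.coe_comp',
    Function.comp_apply, ContinuousLinearMap.apply_apply, ContinuousLinearMap.coe_fst',
    ContinuousLinearMap.proj_apply, smul_eq_mul] at h0
  unfold Hd
  linear_combination h0

end KQ

namespace KQ
variable {n : ℕ}

lemma hConjProj (k : Fin n) (p : (Fin n → ℂ) × ℝ) :
    HasFDerivAt (fun q : (Fin n → ℂ) × ℝ => (conj (q.1 k) : ℂ))
      (Complex.conjCLE.toContinuousLinearMap.comp
        ((ContinuousLinearMap.proj k).comp (ContinuousLinearMap.fst ℝ (Fin n → ℂ) ℝ))) p :=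
  (Complex.conjCLE.toContinuousLinearMap.hasFDerivAt).comp p (hProj k p)

lemma key_sym {f g : (Fin n → ℂ) × ℝ → ℂ} (hf : ContDiff ℝ (⊤ : ℕ∞) f) (hg : ContDiff ℝ (⊤ : ℕ∞) g)
    (k l : Fin n)
    (h : ∀ p, Zderiv k f p + conj (Zderiv l g p) = 0) (p w : (Fin n → ℂ) × ℝ) :
    (1/2 : ℂ) * (Hd f p w (Pi.single k 1, 0) - Complex.I * Hd f p w (Pi.single k Complex.I, 0))
      + Complex.I * conj (w.1 k) * fderiv ℝ f p (0, 1)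
      + Complex.I * conj (p.1 k) * Hd f p w (0, 1)
      + ((1/2 : ℂ) * (conj (Hd g p w (Pi.single l 1, 0))
          + Complex.I * conj (Hd g p w (Pi.single l Complex.I, 0)))
        - Complex.I * w.1 l * conj (fderiv ℝ g p (0, 1))
        - Complex.I * p.1 l * conj (Hd g p w (0, 1))) = 0 := by
  have h1 := hEval hf p ((Pi.single k 1, 0) : (Fin n → ℂ) × ℝ)
  have h2 := hEval hf p ((Pi.single k Complex.I, 0) : (Fin n → ℂ) × ℝ)
  have h3 := hEval hf p ((0, 1) : (Fin n → ℂ) × ℝ)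
  have g1 := hEval hg p ((Pi.single l 1, 0) : (Fin n → ℂ) × ℝ)
  have g2 := hEval hg p ((Pi.single l Complex.I, 0) : (Fin n → ℂ) × ℝ)
  have g3 := hEval hg p ((0, 1) : (Fin n → ℂ) × ℝ)
  have hZf := ((h1.sub (h2.const_mul Complex.I)).const_mul ((1:ℂ)/2)).add
    (((hConjProj k p).const_mul Complex.I).mul h3)
  have hZg := ((g1.sub (g2.const_mul Complex.I)).const_mul ((1:ℂ)/2)).add
    (((hConjProj l p).const_mul Complex.I).mul g3)
  have hcZg := (Complex.conjCLE.toContinuousLinearMap.hasFDerivAt).comp p hZg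
  have hG := hZf.add hcZg
  have h0 := zero_deriv (g := fun q => Zderiv k f q + conj (Zderiv l g q))
    (fun q => h q) (hG.congr_of_eventuallyEq (Filter.Eventually.of_forall fun q => by simp [Zderiv])) w
  simp only [ContinuousLinearMap.coe_sub', Pi.sub_apply, ContinuousLinearMap.coe_smul',
    Pi.smul_apply, ContinuousLinearMap.add_apply, ContinuousLinearMap.coe_comp',
    Function.comp_apply, ContinuousLinearMap.apply_apply, ContinuousLinearMap.coe_fst',
    ContinuousLinearMap.proj_apply, smul_eq_mul, ContinuousLinearEquiv.coe_coe,
    Complex.conjCLE_apply] at h0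
  simp only [map_add, map_sub, map_mul, map_one, map_div₀, map_inv₀, map_ofNat, Complex.conj_conj,
    Complex.conj_I] at h0
  unfold Hd
  linear_combination h0

end KQ

namespace KQ
variable {n : ℕ}

lemma key_T {f : (Fin n → ℂ) × ℝ → ℂ} (hf : ContDiff ℝ (⊤ : ℕ∞) f)
    (h : ∀ p, fderiv ℝ f p ((0 : Fin n → ℂ), (1:ℝ)) = 0) (p w : (Fin n → ℂ) × ℝ) :
    Hd f p w ((0 : Fin n → ℂ), (1:ℝ)) = 0 := by
  have h0 := zero_deriv (g := fun q => fderiv ℝ f q ((0 : Fin n → ℂ), (1:ℝ))) h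
    (hEval hf p ((0 : Fin n → ℂ), (1:ℝ))) w
  simpa [Hd] using h0

lemma clm_eq_zero {M : Type*} [NormedAddCommGroup M] [NormedSpace ℝ M]
    (L : ((Fin n → ℂ) × ℝ) →L[ℝ] M)
    (hX : ∀ k, L (Pi.single k 1, 0) = 0) (hY : ∀ k, L (Pi.single k Complex.I, 0) = 0)
    (hT : L ((0 : Fin n → ℂ), (1:ℝ)) = 0) : L = 0 := by
  refine ContinuousLinearMap.ext fun q => ?_
  obtain ⟨v, s⟩ := q
  have h1 : ((v, s) : (Fin n → ℂ) × ℝ) = (v, 0) + s • ((0 : Fin n → ℂ), (1:ℝ)) := by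
    simp [Prod.ext_iff]
  have h2 : ((v, 0) : (Fin n → ℂ) × ℝ) = ∑ k, ((Pi.single k (v k) : Fin n → ℂ), (0:ℝ)) := by
    rw [← prod_mk_sum]
    simp [Finset.univ_sum_single]
  have h3 : ∀ k, ((Pi.single k (v k) : Fin n → ℂ), (0:ℝ))
      = (v k).re • ((Pi.single k 1, 0) : (Fin n → ℂ) × ℝ)
        + (v k).im • ((Pi.single k Complex.I, 0) : (Fin n → ℂ) × ℝ) := by
    intro k
    refine Prod.ext ?_ (by simp)
    show (Pi.single k (v k) : Fin n → ℂ) = (v k).re • (Pi.single k (1:ℂ) : Fin n → ℂ) + (v k).im • (Pi.single k Complex.I : Fin n → ℂ)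
    rw [← Pi.single_smul, ← Pi.single_smul, ← Pi.single_add]
    simp [Complex.real_smul, Complex.re_add_im]
  rw [h1, map_add, map_smul, hT, smul_zero, add_zero, h2, map_sum]
  refine Finset.sum_eq_zero fun k _ => ?_
  rw [h3, map_add, map_smul, map_smul, hX, hY, smul_zero, smul_zero, add_zero]

end KQ

namespace KQ
variable {n : ℕ}

lemma clm_decomp (L : ((Fin n → ℂ) × ℝ) →L[ℝ] ℂ) (q : (Fin n → ℂ) × ℝ) :
    L q = (∑ k, ((q.1 k).re • L (Pi.single k 1, 0)
        + (q.1 k).im • L (Pi.single k Complex.I, 0)))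
      + q.2 • L ((0 : Fin n → ℂ), (1:ℝ)) := by
  obtain ⟨v, s⟩ := q
  have h1 : ((v, s) : (Fin n → ℂ) × ℝ) = (v, 0) + s • ((0 : Fin n → ℂ), (1:ℝ)) := by
    simp [Prod.ext_iff]
  have h2 : ((v, 0) : (Fin n → ℂ) × ℝ) = ∑ k, ((Pi.single k (v k) : Fin n → ℂ), (0:ℝ)) := by
    rw [← prod_mk_sum]
    simp [Finset.univ_sum_single]
  have h3 : ∀ k : Fin n, ((Pi.single k (v k) : Fin n → ℂ), (0:ℝ))
      = (v k).re • ((Pi.single k 1, 0) : (Fin n → ℂ) × ℝ)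
        + (v k).im • ((Pi.single k Complex.I, 0) : (Fin n → ℂ) × ℝ) := by
    intro k
    refine Prod.ext ?_ (by simp)
    show (Pi.single k (v k) : Fin n → ℂ)
      = (v k).re • (Pi.single k (1:ℂ) : Fin n → ℂ) + (v k).im • (Pi.single k Complex.I : Fin n → ℂ)
    rw [← Pi.single_smul, ← Pi.single_smul, ← Pi.single_add]
    simp [Complex.real_smul, Complex.re_add_im]
  conv_lhs => rw [h1, map_add, map_smul, h2, map_sum]
  congr 1
  refine Finset.sum_congr rfl fun k _ => ?_
  rw [h3, map_add, map_smul, map_smul]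

end KQ

open KQ in
/-- Kernel of `Q` on `ℍⁿ`, `n > 2`: a smooth `u : ℍⁿ → ℂⁿ` with
`Z_k u_l + conj (Z_l u_k) = 0` and `Z̄_k u_l = 0` for all `k, l` is of the form
`u(z,t) = a + K z` with `K` a constant skew-Hermitian matrix. -/
theorem kernel_Q_linear {n : ℕ} (hn : 2 < n)
    (u : (Fin n → ℂ) × ℝ → (Fin n → ℂ))
    (hu : ContDiff ℝ (⊤ : ℕ∞) u)
    (hsym : ∀ k l : Fin n, ∀ p, Zderiv k (fun q => u q l) p
        + conj (Zderiv l (fun q => u q k) p) = 0)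
    (hbar : ∀ k l : Fin n, ∀ p, Zbarderiv k (fun q => u q l) p = 0) :
    ∃ a : Fin n → ℂ, ∃ K : Matrix (Fin n) (Fin n) ℂ,
      (∀ k l, K k l + conj (K l k) = 0) ∧
      ∀ p : (Fin n → ℂ) × ℝ, ∀ l, u p l = a l + ∑ j, K l j * p.1 j := by
  have hf : ∀ l, ContDiff ℝ (⊤ : ℕ∞) (fun q => u q l) := fun l =>
    (ContinuousLinearMap.proj l : (Fin n → ℂ) →L[ℝ] ℂ).contDiff.comp hu
  -- Step 1: the `T`-derivative vanishes
  have hT0 : ∀ (l : Fin n) (p : (Fin n → ℂ) × ℝ),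
      fderiv ℝ (fun q => u q l) p ((0 : Fin n → ℂ), (1:ℝ)) = 0 := by
    intro l p
    obtain ⟨k, hkl⟩ : ∃ k : Fin n, k ≠ l := by
      by_cases h : l = ⟨0, by omega⟩
      · exact ⟨⟨1, by omega⟩, by simp [h, Fin.ext_iff]⟩
      · exact ⟨⟨0, by omega⟩, fun hc => h hc.symm⟩
    have hlk : l ≠ k := hkl.symm
    have B1 := key_bar (hf l) k (hbar k l) p (Pi.single k 1, 0)
    have B2 := key_bar (hf l) k (hbar k l) p (Pi.single k Complex.I, 0)
    have B3 := key_bar (hf l) k (hbar k l) p ((0 : Fin n → ℂ), (1:ℝ))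
    have B1' := key_bar (hf k) l (hbar l k) p (Pi.single k 1, 0)
    have B2' := key_bar (hf k) l (hbar l k) p (Pi.single k Complex.I, 0)
    have B3' := key_bar (hf k) l (hbar l k) p ((0 : Fin n → ℂ), (1:ℝ))
    have S1 := key_sym (hf l) (hf k) k l (hsym k l) p (Pi.single k 1, 0)
    have S2 := key_sym (hf l) (hf k) k l (hsym k l) p (Pi.single k Complex.I, 0)
    have S3 := key_sym (hf l) (hf k) k l (hsym k l) p ((0 : Fin n → ℂ), (1:ℝ))
    have S1' := key_sym (hf k) (hf k) k k (hsym k k) p (Pi.single l 1, 0)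
    have S2' := key_sym (hf k) (hf k) k k (hsym k k) p (Pi.single l Complex.I, 0)
    have S3' := key_sym (hf k) (hf k) k k (hsym k k) p ((0 : Fin n → ℂ), (1:ℝ))
    simp only [Pi.single_eq_same, Pi.single_eq_of_ne hkl,
      Pi.single_eq_of_ne hlk, Pi.zero_apply, map_one, map_zero, Complex.conj_I,
      mul_zero, zero_mul, mul_one, one_mul, add_zero, zero_add, sub_zero]
      at B1 B2 B3 B1' B2' B3' S1 S2 S3 S1' S2' S3'
    have w1 := symmH (hf l) p (Pi.single k Complex.I, 0) (Pi.single k 1, 0)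
    have w2 := symmH (hf l) p ((0 : Fin n → ℂ), (1:ℝ)) (Pi.single k 1, 0)
    have w3 := symmH (hf l) p ((0 : Fin n → ℂ), (1:ℝ)) (Pi.single k Complex.I, 0)
    have w4 := symmH (hf k) p (Pi.single l 1, 0) (Pi.single k 1, 0)
    have w5 := symmH (hf k) p (Pi.single l 1, 0) (Pi.single k Complex.I, 0)
    have w6 := symmH (hf k) p (Pi.single l Complex.I, 0) (Pi.single k 1, 0)
    have w7 := symmH (hf k) p (Pi.single l Complex.I, 0) (Pi.single k Complex.I, 0)
    have w8 := symmH (hf k) p ((0 : Fin n → ℂ), (1:ℝ)) (Pi.single l 1, 0)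
    have w9 := symmH (hf k) p ((0 : Fin n → ℂ), (1:ℝ)) (Pi.single l Complex.I, 0)
    have w10 := symmH (hf k) p ((0 : Fin n → ℂ), (1:ℝ)) (Pi.single k 1, 0)
    have w11 := symmH (hf k) p ((0 : Fin n → ℂ), (1:ℝ)) (Pi.single k Complex.I, 0)
    simp only [w1, w2, w3, w4, w5, w6, w7, w8, w9, w10, w11]
      at B1 B2 B3 B1' B2' B3' S1 S2 S3 S1' S2' S3'
    have h2it : (2 : ℂ) * Complex.I * fderiv ℝ (fun q => u q l) p ((0 : Fin n → ℂ), (1:ℝ)) = 0 := by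
      linear_combination (norm := ring_nf)
        (1/2 : ℂ) * S1 + (Complex.I/2) * S2 - Complex.I * (p.1 k) * S3
        - (1/2 : ℂ) * S1' - (Complex.I/2) * S2' + Complex.I * (p.1 l) * S3'
        - (1/2 : ℂ) * B1 + (Complex.I/2) * B2 - Complex.I * conj (p.1 k) * B3
        + (1/2 : ℂ) * B1' - (Complex.I/2) * B2' + Complex.I * conj (p.1 k) * B3'
        + Complex.I * (fderiv ℝ (fun q => u q l) p ((0 : Fin n → ℂ), (1:ℝ))) * Complex.I_mul_I
    linear_combination Complex.I_mul_I * (fderiv ℝ (fun q => u q l) p ((0 : Fin n → ℂ), (1:ℝ)))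
      - Complex.I/2 * h2it
  -- Step 2: second derivatives against `T` vanish
  have hHT : ∀ (l : Fin n) (p w : (Fin n → ℂ) × ℝ),
      Hd (fun q => u q l) p w ((0 : Fin n → ℂ), (1:ℝ)) = 0 :=
    fun l p w => key_T (hf l) (hT0 l) p w
  -- Step 3: all second derivatives vanish
  have hH0 : ∀ (l : Fin n) (p : (Fin n → ℂ) × ℝ),
      fderiv ℝ (fderiv ℝ (fun q => u q l)) p = 0 := by
    intro l p
    have hB : ∀ (a c : Fin n) (w : (Fin n → ℂ) × ℝ),
        Hd (fun q => u q a) p w (Pi.single c 1, 0)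
          + Complex.I * Hd (fun q => u q a) p w (Pi.single c Complex.I, 0) = 0 := by
      intro a c w
      have h := key_bar (hf a) c (hbar c a) p w
      rw [hT0 a p, hHT a p w] at h
      linear_combination 2 * h
    have hY : ∀ (a c : Fin n) (w : (Fin n → ℂ) × ℝ),
        Hd (fun q => u q a) p w (Pi.single c Complex.I, 0)
          = Complex.I * Hd (fun q => u q a) p w (Pi.single c 1, 0) := by
      intro a c w
      linear_combination Complex.I_mul_I * (Hd (fun q => u q a) p w (Pi.single c Complex.I, 0))
        - Complex.I * hB a c w
    have hstar : ∀ (a c : Fin n) (w : (Fin n → ℂ) × ℝ),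
        Hd (fun q => u q a) p w (Pi.single c 1, 0)
          + conj (Hd (fun q => u q c) p w (Pi.single a 1, 0)) = 0 := by
      intro a c w
      have hs := key_sym (hf a) (hf c) c a (hsym c a) p w
      rw [hT0 a p, hT0 c p, hHT a p w, hHT c p w] at hs
      simp only [mul_zero, add_zero, map_zero, sub_zero] at hs
      have hb2 := congrArg conj (hB c a w)
      simp only [map_add, map_mul, Complex.conj_I, map_zero] at hb2
      linear_combination hs + (1/2 : ℂ) * hB a c w + (1/2 : ℂ) * hb2
    have hXX : ∀ (a m c : Fin n),
        Hd (fun q => u q a) p (Pi.single m 1, 0) (Pi.single c 1, 0) = 0 := by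
      intro a m c
      have hi := hstar a c (Pi.single m 1, 0)
      have hii := hstar a c (Pi.single m Complex.I, 0)
      have e1 : Hd (fun q => u q a) p (Pi.single m Complex.I, 0) (Pi.single c 1, 0)
          = Complex.I * Hd (fun q => u q a) p (Pi.single m 1, 0) (Pi.single c 1, 0) := by
        rw [symmH (hf a) p, hY a m (Pi.single c 1, 0), symmH (hf a) p]
      have e2 : Hd (fun q => u q c) p (Pi.single m Complex.I, 0) (Pi.single a 1, 0)
          = Complex.I * Hd (fun q => u q c) p (Pi.single m 1, 0) (Pi.single a 1, 0) := by
        rw [symmH (hf c) p, hY c m (Pi.single a 1, 0), symmH (hf c) p]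
      rw [e1, e2] at hii
      simp only [map_mul, Complex.conj_I] at hii
      -- hii : I * φ + (-I) * conj ψ = 0,  hi : φ + conj ψ = 0
      linear_combination (1/2 : ℂ) * hi
        - (Complex.I / 2) * hii
        + (1/2 : ℂ) * Complex.I_mul_I
          * (Hd (fun q => u q a) p (Pi.single m 1, 0) (Pi.single c 1, 0)
            - conj (Hd (fun q => u q c) p (Pi.single m 1, 0) (Pi.single a 1, 0)))
    refine clm_eq_zero _ ?_ ?_ ?_
    · intro m
      refine clm_eq_zero _ ?_ ?_ ?_
      · intro c; exact hXX l m c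
      · intro c
        show Hd (fun q => u q l) p (Pi.single m 1, 0) (Pi.single c Complex.I, 0) = 0
        rw [hY l c (Pi.single m 1, 0), hXX l m c, mul_zero]
      · exact hHT l p _
    · intro m
      refine clm_eq_zero _ ?_ ?_ ?_
      · intro c
        show Hd (fun q => u q l) p (Pi.single m Complex.I, 0) (Pi.single c 1, 0) = 0
        rw [symmH (hf l) p, hY l m (Pi.single c 1, 0), symmH (hf l) p, hXX l m c, mul_zero]
      · intro c
        show Hd (fun q => u q l) p (Pi.single m Complex.I, 0) (Pi.single c Complex.I, 0) = 0
        rw [hY l c (Pi.single m Complex.I, 0), symmH (hf l) p,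
          hY l m (Pi.single c 1, 0), symmH (hf l) p, hXX l m c, mul_zero, mul_zero]
      · exact hHT l p _
    · refine clm_eq_zero _ ?_ ?_ ?_
      · intro c
        show Hd (fun q => u q l) p ((0 : Fin n → ℂ), (1:ℝ)) (Pi.single c 1, 0) = 0
        rw [symmH (hf l) p]
        exact hHT l p _
      · intro c
        show Hd (fun q => u q l) p ((0 : Fin n → ℂ), (1:ℝ)) (Pi.single c Complex.I, 0) = 0
        rw [symmH (hf l) p]
        exact hHT l p _
      · exact hHT l p _
  -- Step 4: the first derivative is constant
  have hDdiff : ∀ l : Fin n, Differentiable ℝ (fderiv ℝ (fun q => u q l)) :=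
    fun l => ((hf l).fderiv_right (m := 1) (WithTop.coe_le_coe.mpr le_top)).differentiable one_ne_zero
  have hDconst : ∀ (l : Fin n) (p : (Fin n → ℂ) × ℝ),
      fderiv ℝ (fun q => u q l) p = fderiv ℝ (fun q => u q l) 0 :=
    fun l p => is_const_of_fderiv_eq_zero (hDdiff l) (hH0 l) p 0
  set L : Fin n → ((Fin n → ℂ) × ℝ) →L[ℝ] ℂ := fun l => fderiv ℝ (fun q => u q l) 0 with hL
  -- Step 5: affine representation
  have haff : ∀ (l : Fin n) (p : (Fin n → ℂ) × ℝ), u p l = u 0 l + L l p := by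
    intro l p
    have hg : ∀ q : (Fin n → ℂ) × ℝ,
        HasFDerivAt (fun q => u q l - L l q) (0 : ((Fin n → ℂ) × ℝ) →L[ℝ] ℂ) q := by
      intro q
      have h1 : HasFDerivAt (fun q => u q l) (L l) q := by
        have := (((hf l).differentiable (by simp)) q).hasFDerivAt
        rwa [hDconst l q] at this
      have := h1.sub (L l).hasFDerivAt
      rw [sub_self] at this
      exact this
    have hconst : u p l - L l p = u 0 l - L l 0 :=
      is_const_of_fderiv_eq_zero (fun q => (hg q).differentiableAt)
        (fun q => (hg q).fderiv) p 0
    rw [map_zero] at hconst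
    linear_combination hconst
  -- the matrix
  refine ⟨fun l => u 0 l, Matrix.of (fun l j => L l (Pi.single j 1, 0)), ?_, ?_⟩
  · intro k l
    have h1 := hsym l k 0
    have hz : ∀ (j m : Fin n), Zderiv j (fun q => u q m) 0 = L m (Pi.single j 1, 0) := by
      intro j m
      have hY : L m (Pi.single j Complex.I, 0) = Complex.I * L m (Pi.single j 1, 0) := by
        have hb := hbar j m 0
        rw [Zbarderiv] at hb
        simp only [Prod.fst_zero, Pi.zero_apply, mul_zero, zero_mul, sub_zero] at hb
        have hb' : (1/2 : ℂ) * (L m (Pi.single j 1, 0)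
            + Complex.I * L m (Pi.single j Complex.I, 0)) = 0 := hb
        linear_combination Complex.I_mul_I * L m (Pi.single j Complex.I, 0) - 2 * Complex.I * hb'
      rw [Zderiv]
      have he1 : fderiv ℝ (fun q => u q m) 0 (Pi.single j 1, 0) = L m (Pi.single j 1, 0) := rfl
      have he2 : fderiv ℝ (fun q => u q m) 0 (Pi.single j Complex.I, 0)
          = L m (Pi.single j Complex.I, 0) := rfl
      simp only [Prod.fst_zero, Pi.zero_apply, map_zero, mul_zero, zero_mul, add_zero]
      rw [he1, he2, hY]
      ring_nf
      rw [Complex.I_sq]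
      ring
    rw [hz l k, hz k l] at h1
    simpa using h1
  · intro p l
    rw [haff l p, clm_decomp (L l) p]
    have hT : L l ((0 : Fin n → ℂ), (1:ℝ)) = 0 := hT0 l 0
    have hY : ∀ j, L l (Pi.single j Complex.I, 0) = Complex.I * L l (Pi.single j 1, 0) := by
      intro j
      have hb := hbar j l 0
      rw [Zbarderiv] at hb
      simp only [Prod.fst_zero, Pi.zero_apply, mul_zero, zero_mul, sub_zero] at hb
      have hb' : (1/2 : ℂ) * (L l (Pi.single j 1, 0)
          + Complex.I * L l (Pi.single j Complex.I, 0)) = 0 := hb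
      linear_combination Complex.I_mul_I * L l (Pi.single j Complex.I, 0) - 2 * Complex.I * hb'
    rw [hT]
    simp only [smul_zero, add_zero, Matrix.of_apply]
    congr 1
    refine Finset.sum_congr rfl fun j _ => ?_
    rw [hY j]
    simp only [Complex.real_smul, smul_eq_mul]
    conv_rhs => rw [← Complex.re_add_im (p.1 j)]
    ring
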